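/- arXiv:1306.0969 — 2 statements merged into one kernel-verified Lean document; each statement's English description precedes it below -/
import Mathlib

section
/- Let B = G − λγ₀ h h^H − θ I where G is Hermitian PSD with rank(G) ≤ K, λγ₀ ≥ 0, θ > 0. If Q ⪰ 0 satisfies B Q = 0 and additionally Tr(h h^H Q) contributes so that on the column space of Q we have G q = (λγ₀ h h^H + θ I) q for every column q of Q, then rank(Q) ≤ min(K+1, M); moreover if Q's column space is orthogonal to h, then rank(Q) ≤ min(K, M). -/
/-!
From `B Q = 0` we get `(G - λγ₀ h hᴴ) Q = θ Q` with `θ ≠ 0`, so `Q = (G - λγ₀ h hᴴ)(θ⁻¹ Q)` and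
the rank of `Q` is at most that of `G - λγ₀ h hᴴ`, a sum of `K + 1` rank-one matrices. If the
columns of `Q` are orthogonal to `h`, then `h hᴴ Q = 0`, so already `G Q = θ Q` and
`rank Q ≤ rank G ≤ K`.
-/

open Matrix ComplexOrder

namespace Matrix

variable {l m n K : Type*} [Fintype n] [Field K]

theorem rank_add_le (A B : Matrix m n K) : (A + B).rank ≤ A.rank + B.rank := by
  have hrange : LinearMap.range (A + B).mulVecLin ≤
      LinearMap.range A.mulVecLin ⊔ LinearMap.range B.mulVecLin := by
    rintro _ ⟨x, rfl⟩
    rw [mulVecLin_add]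
    exact Submodule.add_mem_sup ⟨x, rfl⟩ ⟨x, rfl⟩
  exact (Submodule.finrank_mono hrange).trans (Submodule.finrank_add_le_finrank_add_finrank _ _)

@[simp]
theorem rank_neg (A : Matrix m n K) : (-A).rank = A.rank := by
  rw [← neg_one_smul K A, rank_smul_of_mem_nonZeroDivisors A (by simp)]

theorem rank_sub_le (A B : Matrix m n K) : (A - B).rank ≤ A.rank + B.rank := by
  simpa [sub_eq_add_neg] using rank_add_le A (-B)

theorem rank_sum_le {ι : Type*} (s : Finset ι) (f : ι → Matrix m n K) :
    (∑ i ∈ s, f i).rank ≤ ∑ i ∈ s, (f i).rank :=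
  Finset.le_sum_of_subadditive (M := Matrix m n K) (N := ℕ) rank rank_zero.le rank_add_le s f

theorem rank_smul_vecMulVec_le (c : K) (u : m → K) (v : n → K) :
    (c • vecMulVec u v).rank ≤ 1 := by
  rw [← smul_vecMulVec]
  exact rank_vecMulVec_le _ _

theorem rank_sum_smul_vecMulVec_le {ι : Type*} (s : Finset ι) (c : ι → K) (u : ι → m → K)
    (v : ι → n → K) : (∑ i ∈ s, c i • vecMulVec (u i) (v i)).rank ≤ s.card :=
  (rank_sum_le s _).trans <| by
    simpa using Finset.sum_le_card_nsmul s _ 1 fun i _ => rank_smul_vecMulVec_le (c i) (u i) (v i)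

theorem rank_le_rank_of_mul_eq_smul [Fintype m] {A : Matrix m m K} {Q : Matrix m n K} {c : K}
    (hc : c ≠ 0) (h : A * Q = c • Q) : Q.rank ≤ A.rank := by
  have hQ : Q = A * (c⁻¹ • Q) := by
    rw [Matrix.mul_smul, h, smul_smul, inv_mul_cancel₀ hc, one_smul]
  rw [hQ]
  exact rank_mul_le_left _ _

theorem vecMulVec_mul_eq_zero [Fintype m] {u : l → K} {v : m → K} {Q : Matrix m n K}
    (h : ∀ x, v ⬝ᵥ Q *ᵥ x = 0) : vecMulVec u v * Q = 0 := by
  have hvQ : v ᵥ* Q = 0 := dotProduct_eq_zero_iff.mp fun x => by rw [← dotProduct_mulVec, h]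
  rw [vecMulVec_mul, hvQ]
  ext
  simp [vecMulVec_apply]

end Matrix

theorem stmt8_general {M K : ℕ}
    (β : Fin K → ℝ) (g : Fin K → Fin M → ℂ)
    (G : Matrix (Fin M) (Fin M) ℂ)
    (hG : G = ∑ k, (β k : ℂ) • vecMulVec (g k) (star (g k)))
    (h : Fin M → ℂ) (lg θ : ℝ) (hθ : 0 < θ)
    (B : Matrix (Fin M) (Fin M) ℂ)
    (hB : B = G - (lg : ℂ) • vecMulVec h (star h) - (θ : ℂ) • 1)
    (Q : Matrix (Fin M) (Fin M) ℂ) (hBQ : B * Q = 0) :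
    Q.rank ≤ min (K + 1) M ∧
    ((∀ x : Fin M → ℂ, star h ⬝ᵥ Q.mulVec x = 0) → Q.rank ≤ min K M) := by
  have hθ0 : (θ : ℂ) ≠ 0 := by exact_mod_cast hθ.ne'
  have hGQ : (G - (lg : ℂ) • vecMulVec h (star h)) * Q = (θ : ℂ) • Q := by
    rwa [hB, sub_mul, sub_eq_zero, smul_mul, one_mul] at hBQ
  have hGrank : G.rank ≤ K := by
    simpa [hG] using rank_sum_smul_vecMulVec_le Finset.univ (fun k => (β k : ℂ)) g (star g)
  refine ⟨le_min ?_ Q.rank_le_width, fun horth => le_min ?_ Q.rank_le_width⟩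
  · calc Q.rank ≤ (G - (lg : ℂ) • vecMulVec h (star h)).rank :=
          rank_le_rank_of_mul_eq_smul hθ0 hGQ
      _ ≤ G.rank + ((lg : ℂ) • vecMulVec h (star h)).rank := rank_sub_le _ _
      _ ≤ K + 1 := add_le_add hGrank (rank_smul_vecMulVec_le _ _ _)
  · have hGQ' : G * Q = (θ : ℂ) • Q := by
      rwa [sub_mul, smul_mul, vecMulVec_mul_eq_zero horth, smul_zero, sub_zero] at hGQ
    exact (rank_le_rank_of_mul_eq_smul hθ0 hGQ').trans hGrank

/-- Rank bound for the optimal Q of the SDR: with B = G − λγ₀ h hᴴ − θI, G PSD of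
rank ≤ K, θ > 0, any PSD Q with B Q = 0 has rank ≤ min(K+1, M); and if moreover
the column space of Q is orthogonal to h, then rank(Q) ≤ min(K, M). -/
theorem stmt8 {M K : ℕ} (hM : 1 ≤ M) (hK : 1 ≤ K)
    (β : Fin K → ℝ) (hβ : ∀ k, 0 ≤ β k) (g : Fin K → Fin M → ℂ)
    (G : Matrix (Fin M) (Fin M) ℂ)
    (hG : G = ∑ k, (β k : ℂ) • vecMulVec (g k) (star (g k)))
    (h : Fin M → ℂ) (lg θ : ℝ) (hlg : 0 ≤ lg) (hθ : 0 < θ)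
    (B : Matrix (Fin M) (Fin M) ℂ)
    (hB : B = G - (lg : ℂ) • vecMulVec h (star h) - (θ : ℂ) • 1)
    (Q : Matrix (Fin M) (Fin M) ℂ) (hQ : Q.PosSemidef) (hBQ : B * Q = 0) :
    Q.rank ≤ min (K + 1) M ∧
    ((∀ x : Fin M → ℂ, star h ⬝ᵥ Q.mulVec x = 0) → Q.rank ≤ min K M) :=
  stmt8_general β g G hG h lg θ hθ B hB Q hBQ
end

section
/- Suppose v₀ = √p₀ η and w_i = √p_i η for a fixed unit vector η with p₀ + Σ_i p_i = P̄, p_i ≥ 0. Then the secrecy rate r₀ = min_k [log₂(1 + p₀|η^H h|²/(Σ_i p_i |η^H h|² + σ₀²)) − log₂(1 + p₀|η^H g_k|²/(Σ_i p_i |η^H g_k|² + σ_k²))] is maximized over the power split by p₀ = P̄, p_i = 0 for all i, with maximum value min_k [log₂(1 + P̄|η^H h|²/σ₀²) − log₂(1 + P̄|η^H g_k|²/σ_k²)], provided this value is nonnegative. -/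
open Matrix

/-! With total power `P` on one beam, writing `u = a / σ` for the normalized gain of a receiver,
its rate is `log₂(1 + P u) - log₂(1 + (P - p) u)`: the artificial-noise power `P - p` costs it
`log₂(1 + (P - p) u)`. So moving power from the noise to the signal changes the secrecy gap to an
eavesdropper of normalized gain `v` by `log₂(1 + (P - p) u) - log₂(1 + (P - p) v)`, which is
nonnegative as soon as `v ≤ u`, i.e. as soon as the gap at `p = P` is nonnegative. -/

namespace AlignedBeam

/-- Rate of a receiver with channel gain `a` and noise power `σ` when the signal gets power `p`
of the total `P` and artificial noise the rest. -/
noncomputable def rate (P p a σ : ℝ) : ℝ :=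
  Real.logb 2 (1 + p * a / ((P - p) * a + σ))

theorem rate_self (P a σ : ℝ) : rate P P a σ = Real.logb 2 (1 + P * a / σ) := by
  simp [rate]

theorem rate_eq_sub {P p a σ : ℝ} (ha : 0 ≤ a) (hσ : 0 < σ) (hP : 0 ≤ P) (hp : p ≤ P) :
    rate P p a σ = Real.logb 2 (1 + P * (a / σ)) - Real.logb 2 (1 + (P - p) * (a / σ)) := by
  have hnoise : 0 < (P - p) * a + σ := by nlinarith [mul_nonneg (sub_nonneg.mpr hp) ha]
  have hfull : 0 < P * a + σ := by nlinarith [mul_nonneg hP ha]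
  have hnormalize : ∀ c, 1 + c * (a / σ) = (c * a + σ) / σ := fun c => by field_simp; ring
  have hquot : 1 + p * a / ((P - p) * a + σ) = (P * a + σ) / ((P - p) * a + σ) := by
    rw [eq_div_iff hnoise.ne', add_mul, div_mul_cancel₀ _ hnoise.ne']
    ring
  rw [rate, hquot, hnormalize, hnormalize,
    ← Real.logb_div (div_pos hfull hσ).ne' (div_pos hnoise hσ).ne',
    div_div_div_cancel_right₀ hσ.ne']

theorem logb_one_add_mul_le_iff {q u v : ℝ} (hq : 0 < q) (hu : 0 ≤ u) (hv : 0 ≤ v) :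
    Real.logb 2 (1 + q * v) ≤ Real.logb 2 (1 + q * u) ↔ v ≤ u := by
  rw [Real.logb_le_logb one_lt_two (by positivity) (by positivity), add_le_add_iff_left,
    mul_le_mul_iff_right₀ hq]

theorem rate_sub_rate_le_self {P p a b σ τ : ℝ} (hP : 0 < P) (ha : 0 ≤ a) (hb : 0 ≤ b)
    (hσ : 0 < σ) (hτ : 0 < τ) (hp : p ≤ P)
    (hgap : 0 ≤ rate P P a σ - rate P P b τ) :
    rate P p a σ - rate P p b τ ≤ rate P P a σ - rate P P b τ := by
  have hu : 0 ≤ a / σ := by positivity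
  have hv : 0 ≤ b / τ := by positivity
  rw [rate_eq_sub ha hσ hP.le hp, rate_eq_sub hb hτ hP.le hp]
  rw [rate_eq_sub ha hσ hP.le le_rfl, rate_eq_sub hb hτ hP.le le_rfl] at hgap ⊢
  simp only [sub_self, zero_mul, add_zero, Real.logb_one, sub_zero] at hgap ⊢
  have hvu : b / τ ≤ a / σ := (logb_one_add_mul_le_iff hP hu hv).mp (by linarith)
  have hcost : Real.logb 2 (1 + (P - p) * (b / τ)) ≤ Real.logb 2 (1 + (P - p) * (a / σ)) := by
    have : 0 ≤ P - p := sub_nonneg.mpr hp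
    gcongr
    norm_num
  linarith

end AlignedBeam

open AlignedBeam in
theorem stmt19_general {M K : ℕ}
    (η h : Fin M → ℂ) (g : Fin K → Fin M → ℂ)
    (σ0 : ℝ) (σ : Fin K → ℝ) (hσ0 : 0 < σ0) (hσ : ∀ k, 0 < σ k)
    (Pb : ℝ) (hP : 0 < Pb)
    (r : ℝ → ℝ)
    (hr : r = fun p0 => ⨅ k : Fin K,
      (Real.logb 2 (1 + p0 * ‖star η ⬝ᵥ h‖ ^ 2 /
          ((Pb - p0) * ‖star η ⬝ᵥ h‖ ^ 2 + σ0))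
        - Real.logb 2 (1 + p0 * ‖star η ⬝ᵥ g k‖ ^ 2 /
          ((Pb - p0) * ‖star η ⬝ᵥ g k‖ ^ 2 + σ k))))
    (hnonneg : 0 ≤ r Pb) :
    IsGreatest (r '' Set.Icc 0 Pb) (r Pb) ∧
    r Pb = ⨅ k : Fin K,
      (Real.logb 2 (1 + Pb * ‖star η ⬝ᵥ h‖ ^ 2 / σ0)
        - Real.logb 2 (1 + Pb * ‖star η ⬝ᵥ g k‖ ^ 2 / σ k)) := by
  set gap : ℝ → Fin K → ℝ := fun p k =>
    rate Pb p (‖star η ⬝ᵥ h‖ ^ 2) σ0 - rate Pb p (‖star η ⬝ᵥ g k‖ ^ 2) (σ k)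
  have hrgap : r = fun p => ⨅ k, gap p k := hr
  have hbdd : ∀ p, BddBelow (Set.range (gap p)) := fun p => (Set.finite_range _).bddBelow
  have hgap_le : ∀ p ∈ Set.Icc 0 Pb, ∀ k, gap p k ≤ gap Pb k := fun p hp k =>
    rate_sub_rate_le_self hP (by positivity) (by positivity) hσ0 (hσ k) hp.2
      (hnonneg.trans (hrgap ▸ ciInf_le (hbdd Pb) k))
  refine ⟨⟨⟨Pb, ⟨hP.le, le_rfl⟩, rfl⟩, ?_⟩, ?_⟩
  · rintro _ ⟨p, hp, rfl⟩
    rw [hrgap]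
    exact ciInf_mono (hbdd p) (hgap_le p hp)
  · simp only [hrgap, gap, rate_self]

/-- When all beams are aligned to the same unit direction η with total power P̄,
the secrecy rate is maximized by allocating all power to the information beam:
p₀ = P̄ gives min_k [log₂(1+P̄|ηᴴh|²/σ₀²) − log₂(1+P̄|ηᴴg_k|²/σ_k²)], provided
this value is nonnegative. -/
theorem stmt19 {M K d : ℕ} (hM : 1 ≤ M) (hK : 1 ≤ K) (hd : 1 ≤ d)
    (η h : Fin M → ℂ) (g : Fin K → Fin M → ℂ) (hη : star η ⬝ᵥ η = 1)
    (σ0 : ℝ) (σ : Fin K → ℝ) (hσ0 : 0 < σ0) (hσ : ∀ k, 0 < σ k)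
    (Pb : ℝ) (hP : 0 < Pb)
    (r : ℝ → ℝ)
    (hr : r = fun p0 => ⨅ k : Fin K,
      (Real.logb 2 (1 + p0 * ‖star η ⬝ᵥ h‖ ^ 2 /
          ((Pb - p0) * ‖star η ⬝ᵥ h‖ ^ 2 + σ0))
        - Real.logb 2 (1 + p0 * ‖star η ⬝ᵥ g k‖ ^ 2 /
          ((Pb - p0) * ‖star η ⬝ᵥ g k‖ ^ 2 + σ k))))
    (hnonneg : 0 ≤ r Pb) :
    IsGreatest (r '' Set.Icc 0 Pb) (r Pb) ∧
    r Pb = ⨅ k : Fin K,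
      (Real.logb 2 (1 + Pb * ‖star η ⬝ᵥ h‖ ^ 2 / σ0)
        - Real.logb 2 (1 + Pb * ‖star η ⬝ᵥ g k‖ ^ 2 / σ k)) :=
  stmt19_general η h g σ0 σ hσ0 hσ Pb hP r hr hnonneg
end
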